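/- arXiv:2501.08060 — 8 statements merged into one kernel-verified Lean document; each statement's English description precedes it below -/
import Mathlib

section
/- Let (X,p) be a partial metric space in which p(x,x) = a for all x ∈ X, where a ≥ 0 is a fixed real number, let I be a nontrivial admissible ideal of subsets of ℕ, let r ≥ 0, and let (x_n) be a sequence in X. Then for all y, z in the rough I-limit set I-LIM^r x_n one has p(y,z) ≤ 2r + 2a; that is, diam(I-LIM^r x_n) ≤ 2r + 2a. -/
/-- A partial metric on `X` (Matthews): nonnegativity with small self-distances,
indistancy implies equality, symmetry, and the modified triangle inequality. -/
structure IsPartialMetric {X : Type*} (p : X → X → ℝ) : Prop where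
  self_nonneg : ∀ x : X, 0 ≤ p x x
  self_le : ∀ x y : X, p x x ≤ p x y
  eq_iff : ∀ x y : X, x = y ↔ (p x x = p x y ∧ p x y = p y y)
  symm : ∀ x y : X, p x y = p y x
  triangle : ∀ x y z : X, p x y ≤ p x z + p z y - p z z

/-- An ideal of subsets of `ℕ`. -/
structure IsIdeal (I : Set (Set ℕ)) : Prop where
  empty_mem : (∅ : Set ℕ) ∈ I
  union_mem : ∀ A B : Set ℕ, A ∈ I → B ∈ I → A ∪ B ∈ I
  subset_mem : ∀ A B : Set ℕ, A ∈ I → B ⊆ A → B ∈ I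

/-- A nontrivial admissible ideal of subsets of `ℕ`. -/
structure IsAdmissibleIdeal (I : Set (Set ℕ)) extends IsIdeal I : Prop where
  univ_not_mem : (Set.univ : Set ℕ) ∉ I
  ne_empty_singleton : I ≠ {∅}
  singleton_mem : ∀ n : ℕ, ({n} : Set ℕ) ∈ I

/-- `(x n)` is rough `I`-convergent to `x₀` of roughness degree `r` w.r.t. the
partial metric `p`. -/
def RoughIdealConv {X : Type*} (I : Set (Set ℕ)) (p : X → X → ℝ)
    (x : ℕ → X) (r : ℝ) (x₀ : X) : Prop :=
  ∀ ε : ℝ, 0 < ε → {n : ℕ | r + ε ≤ |p (x n) x₀ - p x₀ x₀|} ∈ I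

theorem diam_roughIdealLimitSet_le
    {X : Type*} [Nonempty X] (p : X → X → ℝ) (hp : IsPartialMetric p)
    (a : ℝ) (ha : 0 ≤ a) (hself : ∀ x : X, p x x = a)
    (I : Set (Set ℕ)) (hI : IsAdmissibleIdeal I)
    (r : ℝ) (hr : 0 ≤ r) (x : ℕ → X) :
    ∀ y ∈ {x₀ : X | RoughIdealConv I p x r x₀},
      ∀ z ∈ {x₀ : X | RoughIdealConv I p x r x₀},
        p y z ≤ 2 * r + 2 * a := by
  intro y hy z hz
  by_contra hcon
  push_neg at hcon
  set ε := (p y z - 2 * r - 2 * a) / 2 with hε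
  have hεpos : 0 < ε := by simp [hε]; linarith
  have hA := hy ε hεpos
  have hB := hz ε hεpos
  have hAB : {n : ℕ | r + ε ≤ |p (x n) y - p y y|} ∪
      {n : ℕ | r + ε ≤ |p (x n) z - p z z|} ∈ I :=
    hI.union_mem _ _ hA hB
  have hne : ∃ n : ℕ, n ∉ {n : ℕ | r + ε ≤ |p (x n) y - p y y|} ∪
      {n : ℕ | r + ε ≤ |p (x n) z - p z z|} := by
    by_contra h
    push_neg at h
    have : ({n : ℕ | r + ε ≤ |p (x n) y - p y y|} ∪
        {n : ℕ | r + ε ≤ |p (x n) z - p z z|}) = Set.univ :=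
      Set.eq_univ_of_forall h
    exact hI.univ_not_mem (this ▸ hAB)
  obtain ⟨n, hn⟩ := hne
  simp only [Set.mem_union, Set.mem_setOf_eq, not_or, not_le] at hn
  obtain ⟨h1, h2⟩ := hn
  have h1' : p (x n) y - a < r + ε := by
    have := abs_lt.mp h1
    rw [hself y] at this; linarith [this.2]
  have h2' : p (x n) z - a < r + ε := by
    have := abs_lt.mp h2
    rw [hself z] at this; linarith [this.2]
  have htri := hp.triangle y z (x n)
  rw [hself (x n), hp.symm y (x n)] at htri
  have : p y z < 2 * r + 2 * ε + a := by linarith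
  have : p y z < p y z - a := by rw [hε] at this; linarith
  linarith
end

section
/- Let (X,p) be a partial metric space, let I be a nontrivial admissible ideal of subsets of ℕ, let r ≥ 0, and let (x_n) be a sequence in X that is I-convergent to a point x ∈ X. Then every point y of the closed ball of radius r centered at x (i.e. p(x,y) ≤ p(x,x) + r) satisfying p(x,x) = p(y,y) belongs to the rough I-limit set I-LIM^r x_n. -/
theorem closedBall_subset_roughIdealLimitSet
    {X : Type*} [Nonempty X] (p : X → X → ℝ) (hp : IsPartialMetric p)
    (I : Set (Set ℕ)) (hI : IsAdmissibleIdeal I)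
    (r : ℝ) (hr : 0 ≤ r) (x : ℕ → X) (x₀ : X)
    (hconv : ∀ ε : ℝ, 0 < ε → {n : ℕ | ε ≤ |p (x n) x₀ - p x₀ x₀|} ∈ I)
    (y : X) (hy : p x₀ y ≤ p x₀ x₀ + r) (hyy : p x₀ x₀ = p y y) :
    RoughIdealConv I p x r y := by
  intro ε hε
  refine hI.subset_mem _ _ (hconv ε hε) ?_
  intro n hn
  simp only [Set.mem_setOf_eq] at hn ⊢
  have h1 : p y y ≤ p (x n) y := by
    have := hp.self_le y (x n); rwa [hp.symm y (x n)] at this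
  have h2 : p (x n) y ≤ p (x n) x₀ + p x₀ y - p x₀ x₀ := hp.triangle _ _ _
  have h3 : p x₀ x₀ ≤ p (x n) x₀ := by
    have := hp.self_le x₀ (x n); rwa [hp.symm x₀ (x n)] at this
  have habs : |p (x n) y - p y y| = p (x n) y - p y y := abs_of_nonneg (by linarith)
  have habs2 : |p (x n) x₀ - p x₀ x₀| = p (x n) x₀ - p x₀ x₀ := abs_of_nonneg (by linarith)
  rw [habs] at hn
  rw [habs2]
  linarith
end

section
/- Let (X,p) be a partial metric space, let I be a nontrivial admissible ideal of subsets of ℕ, let r ≥ 0, and let (x_n) be a sequence in X. Then the rough I-limit set I-LIM^r x_n is sequentially closed: if (y_k) is a sequence of points of I-LIM^r x_n that converges in the partial metric sense to a point y ∈ X (i.e. p(y_k, y) → p(y,y) as k → ∞), then y ∈ I-LIM^r x_n. -/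
theorem roughIdealLimitSet_seq_closed
    {X : Type*} [Nonempty X] (p : X → X → ℝ) (hp : IsPartialMetric p)
    (I : Set (Set ℕ)) (hI : IsAdmissibleIdeal I)
    (r : ℝ) (hr : 0 ≤ r) (x : ℕ → X)
    (y : ℕ → X) (hy : ∀ k : ℕ, RoughIdealConv I p x r (y k))
    (z : X)
    (hconv : ∀ ε : ℝ, 0 < ε → ∃ k₀ : ℕ, ∀ k ≥ k₀, |p (y k) z - p z z| < ε) :
    RoughIdealConv I p x r z := by
  intro ε hε
  obtain ⟨k₀, hk₀⟩ := hconv (ε / 2) (by linarith)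
  have hk := hk₀ k₀ le_rfl
  have hA := hy k₀ (ε / 2) (by linarith)
  refine hI.subset_mem _ _ hA ?_
  intro n hn
  simp only [Set.mem_setOf_eq] at hn ⊢
  -- nonnegativity facts
  have h1 : p z z ≤ p (x n) z := by
    have := hp.self_le z (x n); rwa [hp.symm z (x n)] at this
  have h2 : p (y k₀) (y k₀) ≤ p (x n) (y k₀) := by
    have := hp.self_le (y k₀) (x n); rwa [hp.symm (y k₀) (x n)] at this
  rw [abs_of_nonneg (by linarith)] at hn
  rw [abs_of_nonneg (by linarith)]
  have htri := hp.triangle (x n) z (y k₀)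
  have hyz : p (y k₀) z - p z z < ε / 2 := by
    have := abs_lt.mp hk; linarith [this.2]
  linarith
end

section
/- Let (X,p) be a partial metric space in which p(x,x) = a for all x ∈ X, where a ≥ 0 is a fixed real number, and let I be a nontrivial admissible ideal of subsets of ℕ. If a sequence (x_n) in X is I-bounded, then there exists a non-negative real number r such that the rough I-limit set I-LIM^r x_n is nonempty. -/
theorem ideal_bounded_implies_roughIdealLimitSet_nonempty
    {X : Type*} [Nonempty X] (p : X → X → ℝ) (hp : IsPartialMetric p)
    (a : ℝ) (ha : 0 ≤ a) (hself : ∀ x : X, p x x = a)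
    (I : Set (Set ℕ)) (hI : IsAdmissibleIdeal I)
    (x : ℕ → X)
    (hbdd : ∀ u : X, ∃ M : ℝ, 0 < M ∧ {n : ℕ | M ≤ p (x n) u} ∈ I) :
    ∃ r : ℝ, 0 ≤ r ∧ ∃ x₀ : X, RoughIdealConv I p x r x₀ := by
  obtain ⟨u⟩ := ‹Nonempty X›
  obtain ⟨M, hM, hMI⟩ := hbdd u
  refine ⟨M, le_of_lt hM, u, ?_⟩
  intro ε hε
  apply hI.subset_mem _ _ hMI
  intro n hn
  simp only [Set.mem_setOf_eq] at *
  have h1 : a ≤ p (x n) u := by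
    have := hp.self_le u (x n)
    rw [hself u, hp.symm u (x n)] at this
    exact this
  rw [hself u, abs_of_nonneg (by linarith)] at hn
  linarith
end

section
/- Let (X,p) be a partial metric space in which p(x,x) = a for all x ∈ X, where a ≥ 0 is a fixed real number, and let I be a nontrivial admissible ideal of subsets of ℕ. If there exists a non-negative real number r such that the rough I-limit set I-LIM^r x_n of a sequence (x_n) in X is nonempty, then (x_n) is I-bounded. -/
theorem roughIdealLimitSet_nonempty_implies_ideal_bounded
    {X : Type*} [Nonempty X] (p : X → X → ℝ) (hp : IsPartialMetric p)
    (a : ℝ) (ha : 0 ≤ a) (hself : ∀ x : X, p x x = a)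
    (I : Set (Set ℕ)) (hI : IsAdmissibleIdeal I)
    (x : ℕ → X)
    (hne : ∃ r : ℝ, 0 ≤ r ∧ ∃ x₀ : X, RoughIdealConv I p x r x₀) :
    ∀ u : X, ∃ M : ℝ, 0 < M ∧ {n : ℕ | M ≤ p (x n) u} ∈ I := by
  obtain ⟨r, hr, x₀, hconv⟩ := hne
  intro u
  refine ⟨r + 2 + p x₀ u, ?_, ?_⟩
  · have h1 : a ≤ p x₀ u := (hself x₀) ▸ hp.self_le x₀ u
    linarith
  · have hsub : {n : ℕ | r + 2 + p x₀ u ≤ p (x n) u} ⊆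
        {n : ℕ | r + 1 ≤ |p (x n) x₀ - p x₀ x₀|} := by
      intro n hn
      simp only [Set.mem_setOf_eq] at hn ⊢
      have htri := hp.triangle (x n) u x₀
      have h2 : p x₀ x₀ = a := hself x₀
      rw [h2]
      have : r + 2 ≤ p (x n) x₀ - a := by linarith
      calc r + 1 ≤ p (x n) x₀ - a := by linarith
        _ ≤ |p (x n) x₀ - a| := le_abs_self _
    exact hI.subset_mem _ _ (hconv 1 one_pos) hsub
end

section
/- Let (X,p) be a partial metric space, let I be a nontrivial admissible ideal of subsets of ℕ, let r ≥ 0, and let (a_n) and (b_n) be two sequences in X such that p(a_n, b_n) → 0 as n → ∞. If (a_n) is rough I-convergent to a point a ∈ X of roughness degree r and p(a_n, a_n) → 0 as n → ∞, then (b_n) is rough I-convergent to a of roughness degree r. -/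
/-! The modified triangle inequality, applied once in each direction, gives
`|p(b_n, a) - p(a_n, a)| ≤ p(a_n, b_n)`. So once `p(a_n, b_n) < ε/2`, every index at which `b`
misses the roughness bound `r + ε` is one at which `a` misses `r + ε/2`; the finitely many
earlier indices form a set in `I` because `I` is admissible. -/

namespace IsPartialMetric

variable {X : Type*} {p : X → X → ℝ}

theorem abs_sub_le (hp : IsPartialMetric p) (x y z : X) : |p x z - p y z| ≤ p x y := by
  have hxz := hp.triangle x z y
  have hyz := hp.triangle y z x
  rw [hp.symm y x] at hyz
  rw [abs_sub_le_iff]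
  constructor <;> linarith [hp.self_nonneg x, hp.self_nonneg y]

end IsPartialMetric

namespace IsIdeal

variable {I : Set (Set ℕ)}

theorem mem_of_finite (hI : IsIdeal I) (hsingleton : ∀ n, ({n} : Set ℕ) ∈ I) {s : Set ℕ}
    (hs : s.Finite) : s ∈ I := by
  induction s, hs using Set.Finite.induction_on with
  | empty => exact hI.empty_mem
  | insert _ _ ih => exact hI.union_mem _ _ (hsingleton _) ih

theorem mem_of_eventually_imp (hI : IsIdeal I) (hsingleton : ∀ n, ({n} : Set ℕ) ∈ I)
    {s t : Set ℕ} (hs : s ∈ I) (hts : ∀ᶠ n in Filter.atTop, n ∈ t → n ∈ s) : t ∈ I := by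
  obtain ⟨N, hN⟩ := Filter.eventually_atTop.mp hts
  have hlt : {n | n < N} ∈ I := hI.mem_of_finite hsingleton (Set.finite_lt_nat N)
  refine hI.subset_mem _ _ (hI.union_mem _ _ hs hlt) fun n hn => ?_
  by_cases hnN : n < N
  · exact Or.inr hnN
  · exact Or.inl (hN n (not_lt.mp hnN) hn)

end IsIdeal

theorem rough_ideal_conv_transfer_general
    {X : Type*} (p : X → X → ℝ) (hp : IsPartialMetric p)
    (I : Set (Set ℕ)) (hI : IsAdmissibleIdeal I)
    (r : ℝ) (a b : ℕ → X)
    (hab : Filter.Tendsto (fun n => p (a n) (b n)) Filter.atTop (nhds 0))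
    (x₀ : X) (ha : RoughIdealConv I p a r x₀) :
    RoughIdealConv I p b r x₀ := by
  intro ε hε
  have hclose : ∀ᶠ n in Filter.atTop, p (a n) (b n) < ε / 2 :=
    hab.eventually (gt_mem_nhds (half_pos hε))
  refine hI.mem_of_eventually_imp hI.singleton_mem (ha (ε / 2) (half_pos hε)) ?_
  filter_upwards [hclose] with n hn hbn
  have hshift : |p (b n) x₀ - p (a n) x₀| ≤ p (a n) (b n) :=
    hp.symm (a n) (b n) ▸ hp.abs_sub_le (b n) (a n) x₀
  have hbn' : r + ε ≤ |p (b n) x₀ - p x₀ x₀| := hbn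
  show r + ε / 2 ≤ |p (a n) x₀ - p x₀ x₀|
  linarith [abs_sub_le (p (b n) x₀) (p (a n) x₀) (p x₀ x₀)]

theorem rough_ideal_conv_transfer
    {X : Type*} [Nonempty X] (p : X → X → ℝ) (hp : IsPartialMetric p)
    (I : Set (Set ℕ)) (hI : IsAdmissibleIdeal I)
    (r : ℝ) (hr : 0 ≤ r) (a b : ℕ → X)
    (hab : Filter.Tendsto (fun n => p (a n) (b n)) Filter.atTop (nhds 0))
    (x₀ : X) (ha : RoughIdealConv I p a r x₀)
    (haa : Filter.Tendsto (fun n => p (a n) (a n)) Filter.atTop (nhds 0)) :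
    RoughIdealConv I p b r x₀ :=
  rough_ideal_conv_transfer_general p hp I hI r a b hab x₀ ha
end

section
/- Let (X,p) be a partial metric space, let I be a nontrivial admissible ideal of subsets of ℕ, let r ≥ 0, and let (a_n) and (b_n) be two sequences in X such that p(a_n, b_n) → 0 as n → ∞. If (b_n) is rough I-convergent to a point b ∈ X of roughness degree r and d is a positive real number such that p(b_n, b_n) ≤ d for all n ∈ ℕ, then (a_n) is rough I-convergent to b of roughness degree r + d. -/
namespace IsAdmissibleIdeal

variable {I : Set (Set ℕ)}

theorem mem_of_finite (hI : IsAdmissibleIdeal I) {S : Set ℕ} (hS : S.Finite) : S ∈ I := by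
  induction S, hS using Set.Finite.induction_on with
  | empty => exact hI.empty_mem
  | @insert n S _ _ ih => exact Set.insert_eq n S ▸ hI.union_mem _ _ (hI.singleton_mem n) ih

theorem setOf_not_mem_of_eventually (hI : IsAdmissibleIdeal I) {P : ℕ → Prop}
    (hP : ∀ᶠ n in Filter.atTop, P n) : {n | ¬P n} ∈ I := by
  obtain ⟨N, hN⟩ := Filter.eventually_atTop.mp hP
  refine hI.subset_mem _ _ (hI.mem_of_finite (Set.finite_Iio N)) fun n hn => ?_
  by_contra hnN
  exact hn (hN n (not_lt.mp hnN))

end IsAdmissibleIdeal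

namespace RoughIdealConv

variable {X : Type*} {p : X → X → ℝ} {I : Set (Set ℕ)} {x : ℕ → X} {x₀ : X}

theorem mono (hI : IsIdeal I) {r s : ℝ} (hrs : r ≤ s) (hx : RoughIdealConv I p x r x₀) :
    RoughIdealConv I p x s x₀ := fun ε hε =>
  hI.subset_mem _ _ (hx ε hε) fun _ hn => (add_le_add_left hrs ε).trans hn

theorem of_tendsto_zero (hp : IsPartialMetric p) (hI : IsAdmissibleIdeal I) {r : ℝ}
    {a b : ℕ → X} (hab : Filter.Tendsto (fun n => p (a n) (b n)) Filter.atTop (nhds 0))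
    (hb : RoughIdealConv I p b r x₀) : RoughIdealConv I p a r x₀ := by
  intro ε hε
  have hclose : ∀ᶠ n in Filter.atTop, p (a n) (b n) < ε / 2 :=
    hab.eventually (gt_mem_nhds (half_pos hε))
  refine hI.subset_mem _ _
    (hI.union_mem _ _ (hI.setOf_not_mem_of_eventually hclose) (hb (ε / 2) (half_pos hε)))
    fun n hn => ?_
  by_contra hnot
  simp only [Set.mem_union, Set.mem_ofPred_eq, not_or, not_not, not_le] at hn hnot
  obtain ⟨hab_n, hb_n⟩ := hnot
  have := calc
    |p (a n) x₀ - p x₀ x₀| ≤ |p (a n) x₀ - p (b n) x₀| + |p (b n) x₀ - p x₀ x₀| :=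
      abs_sub_le _ _ _
    _ < ε / 2 + (r + ε / 2) := add_lt_add_of_le_of_lt ((hp.abs_sub_le _ _ _).trans hab_n.le) hb_n
  linarith

end RoughIdealConv

theorem rough_ideal_conv_transfer_degree_back_general
    {X : Type*} (p : X → X → ℝ) (hp : IsPartialMetric p)
    (I : Set (Set ℕ)) (hI : IsAdmissibleIdeal I)
    (r : ℝ) (a b : ℕ → X)
    (hab : Filter.Tendsto (fun n => p (a n) (b n)) Filter.atTop (nhds 0))
    (x₀ : X) (hb : RoughIdealConv I p b r x₀)
    (d : ℝ) (hd : 0 < d) :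
    RoughIdealConv I p a (r + d) x₀ :=
  (RoughIdealConv.of_tendsto_zero hp hI hab hb).mono hI.toIsIdeal (le_add_of_nonneg_right hd.le)

theorem rough_ideal_conv_transfer_degree_back
    {X : Type*} [Nonempty X] (p : X → X → ℝ) (hp : IsPartialMetric p)
    (I : Set (Set ℕ)) (hI : IsAdmissibleIdeal I)
    (r : ℝ) (hr : 0 ≤ r) (a b : ℕ → X)
    (hab : Filter.Tendsto (fun n => p (a n) (b n)) Filter.atTop (nhds 0))
    (x₀ : X) (hb : RoughIdealConv I p b r x₀)
    (d : ℝ) (hd : 0 < d) (hbb : ∀ n : ℕ, p (b n) (b n) ≤ d) :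
    RoughIdealConv I p a (r + d) x₀ :=
  rough_ideal_conv_transfer_degree_back_general p hp I hI r a b hab x₀ hb d hd
end

section
/- Let (X,p) be a partial metric space in which p(x,x) = a for all x ∈ X, where a ≥ 0 is a fixed real number, let I be a nontrivial admissible ideal of subsets of ℕ, let r > 0, and let (x_n) be a sequence in X. If c ∈ X is an I-cluster point of (x_n), then I-LIM^r x_n is contained in the closed ball of radius r centered at c; that is, every w ∈ I-LIM^r x_n satisfies p(c,w) ≤ p(c,c) + r = a + r. -/
theorem roughIdealLimitSet_subset_closedBall_of_clusterPoint
    {X : Type*} [Nonempty X] (p : X → X → ℝ) (hp : IsPartialMetric p)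
    (a : ℝ) (ha : 0 ≤ a) (hself : ∀ x : X, p x x = a)
    (I : Set (Set ℕ)) (hI : IsAdmissibleIdeal I)
    (r : ℝ) (hr : 0 < r) (x : ℕ → X)
    (c : X) (hc : ∀ ε : ℝ, 0 < ε → {n : ℕ | |p (x n) c - p c c| < ε} ∉ I)
    (w : X) (hw : RoughIdealConv I p x r w) :
    p c w ≤ a + r := by
  by_contra h
  push_neg at h
  set ε : ℝ := (p c w - a - r) / 2 with hε
  have hεpos : 0 < ε := by simp [hε]; linarith
  have hA := hc ε hεpos
  have hB := hw ε hεpos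
  have hsub : ¬ ({n : ℕ | |p (x n) c - p c c| < ε} ⊆ {n : ℕ | r + ε ≤ |p (x n) w - p w w|}) := by
    intro hs
    exact hA (hI.subset_mem _ _ hB hs)
  rw [Set.not_subset] at hsub
  obtain ⟨n, hn1, hn2⟩ := hsub
  simp only [Set.mem_setOf_eq] at hn1 hn2
  push_neg at hn2
  have h1 : p (x n) c < a + ε := by
    have := abs_lt.mp hn1; rw [hself c] at this; linarith [this.2]
  have h2 : p (x n) w < a + r + ε := by
    have := abs_lt.mp hn2; rw [hself w] at this; linarith [this.2]
  have ht := hp.triangle c w (x n)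
  rw [hself (x n), hp.symm c (x n)] at ht
  have : p c w < a + r + 2 * ε := by linarith
  simp [hε] at this; linarith
end
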